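/- Let t, k, l be integers with t ≥ 3, k ≥ 3, and l > t (so l ≥ t + 1 ≥ 4). Then the three-color Ramsey number satisfies R(t, k, l) > (t + 1) · (R(k, l − t + 1) − 1). -/

import Mathlib

/-- A coloring `χ` of the edges of the complete graph on `V` contains a
monochromatic `K_m` of color `c`: there are `m` vertices all of whose
pairwise edges receive color `c`. -/
def HasMonoClique {V C : Type*} (χ : V → V → C) (c : C) (m : ℕ) : Prop :=
  ∃ s : Finset V, s.card = m ∧ ∀ u ∈ s, ∀ v ∈ s, u ≠ v → χ u v = c

/-- `N` satisfies the multicolor Ramsey property for clique sizes `k : Fin r → ℕ`: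
every symmetric `r`-coloring of the edges of `K_N` contains, for some color `i`,
a monochromatic `K_{k i}` of color `i`. -/
def RamseyProp (r : ℕ) (k : Fin r → ℕ) (N : ℕ) : Prop :=
  ∀ χ : Fin N → Fin N → Fin r, (∀ u v, χ u v = χ v u) →
    ∃ i : Fin r, HasMonoClique χ i (k i)

/-- `N` is the multicolor Ramsey number `R(k 0, …, k (r-1))`: the least positive
integer with the Ramsey property. -/
def IsRamseyNumber (r : ℕ) (k : Fin r → ℕ) (N : ℕ) : Prop :=
  0 < N ∧ RamseyProp r k N ∧ ∀ M, 0 < M → RamseyProp r k M → N ≤ M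
/-!
Blow each vertex `x` of a 2-colouring `χ` of `K_{M-1}` with no `K_k` of colour 0 and no
`K_{l-t+1}` of colour 1 up into a fibre of `t + 1` vertices `(i, x)`, `0 ≤ i ≤ t`. Edges over a
0-coloured base edge get colour 1, so colour-1 cliques project to colour-0 cliques of `χ`. Inside
a fibre the pairs `{2a, 2a+1}` get colour 2 and all other edges colour 0. Over a 1-coloured base
edge `{x, y}` with `x < y`, the edge `{(i, x), (j, y)}` gets colour 0 if `j + 1 = i` and colour 2
otherwise.

A colour-0 triangle cannot leave a fibre (layers of different fibres would have to be pairwise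
adjacent, or to descend strictly in both directions), and a fibre holds at most `t/2 + 1 < t`
pairwise 0-coloured vertices. A colour-2 clique meets each fibre at most twice and its fibres form
a 1-coloured clique of `χ`, so at most `l - t` of them; the orientation rule forces the fibres met
twice to use different pairs `{2a, 2a+1}`, of which there are only `(t + 1)/2 < t`.
-/

section MonoClique

variable {V W C : Type*} {χ : W → W → C} {c : C}

lemma hasMonoClique_card_image [DecidableEq W] (f : V → W) (s : Finset V)
    (h : ∀ u ∈ s, ∀ v ∈ s, f u ≠ f v → χ (f u) (f v) = c) :
    HasMonoClique χ c (s.image f).card := by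
  refine ⟨s.image f, rfl, ?_⟩
  simp only [Finset.mem_image]
  rintro _ ⟨u, hu, rfl⟩ _ ⟨v, hv, rfl⟩ huv
  exact h u hu v hv huv

lemma HasMonoClique.of_comp {f : V → W} (hf : Function.Injective f) {n : ℕ}
    (h : HasMonoClique (fun a b => χ (f a) (f b)) c n) : HasMonoClique χ c n := by
  classical
  obtain ⟨s, rfl, hs⟩ := h
  rw [← Finset.card_image_of_injective s hf]
  exact hasMonoClique_card_image f s fun u hu v hv huv => hs u hu v hv (ne_of_apply_ne f huv)

lemma HasMonoClique.mono {n m : ℕ} (h : HasMonoClique χ c n) (hmn : m ≤ n) :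
    HasMonoClique χ c m := by
  obtain ⟨s, rfl, hs⟩ := h
  obtain ⟨t, hts, rfl⟩ := Finset.exists_subset_card_eq hmn
  exact ⟨t, rfl, fun u hu v hv => hs u (hts hu) v (hts hv)⟩

end MonoClique

lemma RamseyProp.exists_hasMonoClique {r : ℕ} {k : Fin r → ℕ} {N : ℕ} (h : RamseyProp r k N)
    {V : Type*} [Fintype V] (hN : N ≤ Fintype.card V) (χ : V → V → Fin r)
    (hχ : ∀ u v, χ u v = χ v u) : ∃ i, HasMonoClique χ i (k i) := by
  obtain ⟨f⟩ := Function.Embedding.nonempty_of_card_le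
    (by simpa using hN : Fintype.card (Fin N) ≤ Fintype.card V)
  obtain ⟨i, hi⟩ := h (fun a b => χ (f a) (f b)) fun a b => hχ _ _
  exact ⟨i, hi.of_comp f.injective⟩

lemma IsRamseyNumber.not_ramseyProp_of_lt {r : ℕ} {k : Fin r → ℕ} {N M : ℕ}
    (h : IsRamseyNumber r k N) (hM : 0 < M) (hMN : M < N) : ¬ RamseyProp r k M :=
  fun hprop => (h.2.2 M hM hprop).not_gt hMN

section Blowup

variable {β : Type*} [LinearOrder β] {t : ℕ}

def LayersInverted (u v : Fin (t + 1) × β) : Prop :=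
  ((u.1 : ℕ) + 1 = v.1 ∧ v.2 < u.2) ∨ ((v.1 : ℕ) + 1 = u.1 ∧ u.2 < v.2)

instance (u v : Fin (t + 1) × β) : Decidable (LayersInverted u v) :=
  inferInstanceAs (Decidable (_ ∨ _))

def blowupColoring (χ : β → β → Fin 2) (u v : Fin (t + 1) × β) : Fin 3 :=
  if u.2 = v.2 then
    if (u.1 : ℕ) / 2 = (v.1 : ℕ) / 2 then 2 else 0
  else if χ u.2 v.2 = 0 then 1
  else if LayersInverted u v then 0
  else 2

variable {χ : β → β → Fin 2} {u v : Fin (t + 1) × β}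

lemma layersInverted_comm : LayersInverted u v ↔ LayersInverted v u :=
  Or.comm

lemma blowupColoring_comm (hχ : ∀ x y, χ x y = χ y x) (u v : Fin (t + 1) × β) :
    blowupColoring χ u v = blowupColoring χ v u := by
  simp only [blowupColoring, eq_comm (a := u.2), eq_comm (a := (u.1 : ℕ) / 2), hχ u.2,
    layersInverted_comm (u := u)]

lemma blowupColoring_eq_one (h : blowupColoring χ u v = 1) : u.2 ≠ v.2 ∧ χ u.2 v.2 = 0 := by
  unfold blowupColoring at h
  split_ifs at h <;> simp_all

lemma blowupColoring_eq_zero_of_snd_eq (hx : u.2 = v.2) (h : blowupColoring χ u v = 0) :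
    (u.1 : ℕ) / 2 ≠ v.1 / 2 := by
  unfold blowupColoring at h
  split_ifs at h <;> simp_all

lemma blowupColoring_eq_zero_of_snd_ne (hx : u.2 ≠ v.2) (h : blowupColoring χ u v = 0) :
    LayersInverted u v := by
  unfold blowupColoring at h
  split_ifs at h <;> simp_all

lemma blowupColoring_eq_two_of_snd_eq (hx : u.2 = v.2) (h : blowupColoring χ u v = 2) :
    (u.1 : ℕ) / 2 = v.1 / 2 := by
  unfold blowupColoring at h
  split_ifs at h <;> simp_all

lemma blowupColoring_eq_two_of_snd_ne (hx : u.2 ≠ v.2) (h : blowupColoring χ u v = 2) :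
    χ u.2 v.2 = 1 ∧ ¬ LayersInverted u v := by
  unfold blowupColoring at h
  split_ifs at h <;> simp_all
  omega

lemma LayersInverted.adjacent (h : LayersInverted u v) :
    (u.1 : ℕ) + 1 = v.1 ∨ (v.1 : ℕ) + 1 = u.1 :=
  h.imp And.left And.left

lemma not_layersInverted_of_snd_eq {w : Fin (t + 1) × β} (hx : u.2 = v.2)
    (hne : (u.1 : ℕ) ≠ v.1) : ¬ (LayersInverted u w ∧ LayersInverted v w) := by
  rintro ⟨hu, hv⟩
  rcases hu with ⟨hu₁, hu₂⟩ | ⟨hu₁, hu₂⟩ <;> rcases hv with ⟨hv₁, hv₂⟩ | ⟨hv₁, hv₂⟩ <;>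
    first | omega | order

lemma snd_eq_of_blowupColoring_triangle {w : Fin (t + 1) × β} (huv : blowupColoring χ u v = 0)
    (huw : blowupColoring χ u w = 0) (hvw : blowupColoring χ v w = 0) : u.2 = v.2 := by
  by_contra hx
  have iuv := blowupColoring_eq_zero_of_snd_ne hx huv
  by_cases hux : u.2 = w.2
  · have hwv : w.2 ≠ v.2 := fun h => hx (hux.trans h)
    have := blowupColoring_eq_zero_of_snd_eq hux huw
    exact not_layersInverted_of_snd_eq hux (by omega)
      ⟨iuv, layersInverted_comm.1 (blowupColoring_eq_zero_of_snd_ne (Ne.symm hwv) hvw)⟩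
  by_cases hvx : v.2 = w.2
  · have := blowupColoring_eq_zero_of_snd_eq hvx hvw
    exact not_layersInverted_of_snd_eq hvx (by omega)
      ⟨layersInverted_comm.1 iuv, layersInverted_comm.1 (blowupColoring_eq_zero_of_snd_ne hux huw)⟩
  have := iuv.adjacent
  have := (blowupColoring_eq_zero_of_snd_ne hux huw).adjacent
  have := (blowupColoring_eq_zero_of_snd_ne hvx hvw).adjacent
  omega

lemma not_hasMonoClique_blowupColoring_zero (ht : 3 ≤ t) :
    ¬ HasMonoClique (blowupColoring (t := t) χ) 0 t := by
  rintro ⟨S, hS, hred⟩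
  have hfibre : ∀ u ∈ S, ∀ v ∈ S, u ≠ v → u.2 = v.2 := by
    intro u hu v hv huv
    obtain ⟨w, hw, hwv⟩ := Finset.exists_mem_ne (s := S.erase u)
      (by rw [Finset.card_erase_of_mem hu]; omega) v
    obtain ⟨hwu, hw⟩ := Finset.mem_erase.1 hw
    exact snd_eq_of_blowupColoring_triangle (hred u hu v hv huv) (hred u hu w hw hwu.symm)
      (hred v hv w hw hwv.symm)
  have hcard : S.card ≤ (Finset.range (t / 2 + 1)).card := by
    refine Finset.card_le_card_of_injOn (fun u => (u.1 : ℕ) / 2) (fun u _ => ?_) ?_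
    · have := u.1.isLt
      simp only [Finset.coe_range, Set.mem_Iio]
      omega
    · intro u hu v hv h
      by_contra huv
      exact blowupColoring_eq_zero_of_snd_eq (hfibre u hu v hv huv) (hred u hu v hv huv) h
  rw [Finset.card_range] at hcard
  omega

lemma not_hasMonoClique_blowupColoring_one {k : ℕ} (hχ : ¬ HasMonoClique χ 0 k) :
    ¬ HasMonoClique (blowupColoring (t := t) χ) 1 k := by
  rintro ⟨S, rfl, hS⟩
  have hinj : Set.InjOn Prod.snd (S : Set (Fin (t + 1) × β)) := fun u hu v hv h =>
    by_contra fun huv => (blowupColoring_eq_one (hS u hu v hv huv)).1 h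
  rw [← Finset.card_image_of_injOn hinj] at hχ
  exact hχ (hasMonoClique_card_image _ _ fun u hu v hv huv =>
    (blowupColoring_eq_one (hS u hu v hv (ne_of_apply_ne _ huv))).2)

def upperVertices (S : Finset (Fin (t + 1) × β)) : Finset (Fin (t + 1) × β) :=
  S.filter fun u => ∃ v ∈ S, v.2 = u.2 ∧ v.1 < u.1

lemma injOn_snd_sdiff_upperVertices (S : Finset (Fin (t + 1) × β)) :
    Set.InjOn Prod.snd (↑(S \ upperVertices S) : Set (Fin (t + 1) × β)) := by
  intro u hu v hv hx
  simp only [upperVertices, Finset.mem_coe, Finset.mem_sdiff, Finset.mem_filter, not_and,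
    not_exists] at hu hv
  rcases lt_trichotomy u.1 v.1 with h | h | h
  · exact absurd h (hv.2 hv.1 u hu.1 hx)
  · exact Prod.ext h hx
  · exact absurd h (hu.2 hu.1 v hv.1 hx.symm)

section BlueClique

variable {S : Finset (Fin (t + 1) × β)}
  (hS : ∀ u ∈ S, ∀ v ∈ S, u ≠ v → blowupColoring χ u v = 2)
include hS

lemma exists_partner_of_mem_upperVertices (hu : u ∈ upperVertices S) :
    u ∈ S ∧ (u.1 : ℕ) % 2 = 1 ∧ ∃ v ∈ S, v.2 = u.2 ∧ (v.1 : ℕ) + 1 = u.1 := by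
  obtain ⟨huS, v, hv, hx, hlt⟩ := Finset.mem_filter.1 hu
  have := blowupColoring_eq_two_of_snd_eq hx (hS v hv u huS (ne_of_apply_ne Prod.fst hlt.ne))
  have : (v.1 : ℕ) < u.1 := hlt
  exact ⟨huS, by omega, v, hv, hx, by omega⟩

lemma card_upperVertices_le : (upperVertices S).card ≤ (t + 1) / 2 := by
  rw [← Finset.card_range ((t + 1) / 2)]
  refine Finset.card_le_card_of_injOn (fun u => (u.1 : ℕ) / 2) (fun u hu => ?_) ?_
  · obtain ⟨-, hodd, -⟩ := exists_partner_of_mem_upperVertices hS hu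
    have := u.1.isLt
    simp only [Finset.coe_range, Set.mem_Iio]
    omega
  · intro u hu u' hu' h
    obtain ⟨huS, hodd, v, hv, hvx, hvu⟩ := exists_partner_of_mem_upperVertices hS hu
    obtain ⟨huS', hodd', v', hv', hvx', hvu'⟩ := exists_partner_of_mem_upperVertices hS hu'
    have hlayer : u.1 = u'.1 := Fin.ext (by simp only at h; omega)
    by_contra hne
    have hx : u.2 ≠ u'.2 := fun hx => hne (Prod.ext hlayer hx)
    have h₁ := (blowupColoring_eq_two_of_snd_ne (hvx' ▸ hx)
      (hS u huS v' hv' (ne_of_apply_ne Prod.snd (hvx' ▸ hx)))).2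
    have h₂ := (blowupColoring_eq_two_of_snd_ne (hvx ▸ hx.symm)
      (hS u' huS' v hv (ne_of_apply_ne Prod.snd (hvx ▸ hx.symm)))).2
    simp only [LayersInverted, hvx, hvx', not_or, not_and] at h₁ h₂
    exact hx (le_antisymm (not_lt.1 (h₂.2 (by omega))) (not_lt.1 (h₁.2 (by omega))))

end BlueClique

lemma not_hasMonoClique_blowupColoring_two {l : ℕ} (ht : 2 ≤ t) (hl : t < l)
    (hχ : ¬ HasMonoClique χ 1 (l - t + 1)) :
    ¬ HasMonoClique (blowupColoring (t := t) χ) 2 l := by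
  rintro ⟨S, rfl, hS⟩
  have hlower : (S \ upperVertices S).card ≤ S.card - t := by
    by_contra! h
    rw [← Finset.card_image_of_injOn (injOn_snd_sdiff_upperVertices S)] at h
    have hblue := hasMonoClique_card_image (χ := χ) (c := 1) Prod.snd (S \ upperVertices S)
      fun u hu v hv hx => (blowupColoring_eq_two_of_snd_ne hx (hS u (Finset.sdiff_subset hu) v
        (Finset.sdiff_subset hv) (ne_of_apply_ne _ hx))).1
    exact hχ (hblue.mono (by omega))
  have hupper := card_upperVertices_le hS
  have hsub : upperVertices S ⊆ S := Finset.filter_subset _ S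
  have := Finset.card_sdiff_add_card_eq_card hsub
  omega

end Blowup

theorem ramsey_three_color_lower_bound_general (t k l : ℕ) (ht : 3 ≤ t)
    (hl : t < l) (N M : ℕ)
    (hN : IsRamseyNumber 3 ![t, k, l] N)
    (hM : IsRamseyNumber 2 ![k, l - t + 1] M) :
    (t + 1) * (M - 1) < N := by
  obtain hM1 | hM1 := le_or_gt M 1
  · simpa [Nat.sub_eq_zero_of_le hM1] using hN.1
  obtain ⟨χ, hχ, hno⟩ : ∃ χ : Fin (M - 1) → Fin (M - 1) → Fin 2, (∀ u v, χ u v = χ v u) ∧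
      ∀ i, ¬ HasMonoClique χ i (![k, l - t + 1] i) := by
    simpa [RamseyProp] using hM.not_ramseyProp_of_lt (by omega) (by omega)
  by_contra! hle
  obtain ⟨i, hi⟩ := hN.2.1.exists_hasMonoClique (V := Fin (t + 1) × Fin (M - 1))
    (by simpa using hle) (blowupColoring χ) (blowupColoring_comm hχ)
  fin_cases i
  · exact not_hasMonoClique_blowupColoring_zero ht hi
  · exact not_hasMonoClique_blowupColoring_one (hno 0) hi
  · exact not_hasMonoClique_blowupColoring_two (by omega) hl (hno 1) hi

/-- For `t ≥ 3`, `k ≥ 3`, `l > t`: `R(t, k, l) > (t + 1) * (R(k, l - t + 1) - 1)`. -/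
theorem ramsey_three_color_lower_bound (t k l : ℕ) (ht : 3 ≤ t) (hk : 3 ≤ k)
    (hl : t < l) (N M : ℕ)
    (hN : IsRamseyNumber 3 ![t, k, l] N)
    (hM : IsRamseyNumber 2 ![k, l - t + 1] M) :
    (t + 1) * (M - 1) < N :=
  ramsey_three_color_lower_bound_general t k l ht hl N M hN hM
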